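/- arXiv:2309.17142 — 7 statements merged into one kernel-verified Lean document; each statement's English description precedes it below -/
import Mathlib

section
/- For every integer m ≥ 1, ∑_{α=1}^{m-1} (-1)^{m+α+1} · C(m, α+1) · α^m = m! - 1. -/
open Finset fwdDiff

private lemma my_fwdDiff_pow (j : ℕ) :
    Δ_[(1:ℤ)] (fun x : ℤ ↦ x ^ j)
      = ∑ i ∈ Finset.range j, (j.choose i : ℤ) • (fun x : ℤ ↦ x ^ i) := by
  ext x
  simp only [fwdDiff, Finset.sum_apply, Pi.smul_apply, smul_eq_mul]
  rw [add_pow, Finset.sum_range_succ]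
  simp only [one_pow, Nat.choose_self, Nat.cast_one, mul_one, Nat.sub_self, pow_zero,
    add_sub_cancel_right]
  exact Finset.sum_congr rfl fun i _ ↦ by ring

private lemma my_fwdDiff_pow_lt : ∀ j n : ℕ, j < n →
    (Δ_[(1:ℤ)])^[n] (fun x : ℤ ↦ x ^ j) = fun _ ↦ 0 := by
  intro j
  induction j using Nat.strong_induction_on with
  | _ j IH =>
    intro n hn
    obtain ⟨n, rfl⟩ : ∃ k, n = k + 1 := ⟨n - 1, by omega⟩
    ext x
    rw [Function.iterate_succ_apply, my_fwdDiff_pow, fwdDiff_iter_finset_sum]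
    rw [Finset.sum_apply]
    apply Finset.sum_eq_zero
    intro i hi
    have hij := Finset.mem_range.mp hi
    rw [fwdDiff_iter_const_smul, IH i hij n (by omega)]
    simp

private lemma my_fwdDiff_pow_self : ∀ m : ℕ,
    (Δ_[(1:ℤ)])^[m] (fun x : ℤ ↦ x ^ m) = fun _ ↦ (m.factorial : ℤ) := by
  intro m
  induction m with
  | zero => simp
  | succ m IH =>
    ext x
    rw [Function.iterate_succ_apply, my_fwdDiff_pow, fwdDiff_iter_finset_sum,
      Finset.sum_range_succ]
    rw [Pi.add_apply, Finset.sum_apply]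
    rw [Finset.sum_eq_zero (fun i hi ↦ by
      rw [fwdDiff_iter_const_smul, my_fwdDiff_pow_lt i m (Finset.mem_range.mp hi)]; simp)]
    rw [fwdDiff_iter_const_smul, IH]
    simp [Nat.factorial_succ, Nat.choose_succ_self_right]

/-- For every integer m ≥ 1, ∑_{α=1}^{m-1} (-1)^(m+α+1) C(m,α+1) α^m = m! - 1. -/
theorem stmt1 (m : ℕ) (hm : 1 ≤ m) :
    ∑ α ∈ Finset.Icc 1 (m - 1), (-1 : ℤ) ^ (m + α + 1) * (m.choose (α + 1)) * (α : ℤ) ^ m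
      = (m.factorial : ℤ) - 1 := by
  have key := fwdDiff_iter_eq_sum_shift (1 : ℤ) (fun x : ℤ ↦ x ^ m) m (-1)
  rw [my_fwdDiff_pow_self m] at key
  have hsplit : Finset.range (m + 1) = insert 0 (insert 1 (Finset.Icc 2 m)) := by
    ext x; simp; omega
  rw [hsplit, Finset.sum_insert (by simp), Finset.sum_insert (by simp)] at key
  simp only [smul_eq_mul] at key
  have h0 : ((-1 : ℤ) ^ (m - 0) * (m.choose 0 : ℤ)) * ((-1) + (0 : ℕ) • (1:ℤ)) ^ m = 1 := by
    simp [← mul_pow]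
  have h1 : ((-1 : ℤ) ^ (m - 1) * (m.choose 1 : ℤ)) * ((-1) + (1 : ℕ) • (1:ℤ)) ^ m = 0 := by
    simp [zero_pow (by omega : m ≠ 0)]
  rw [h0, h1] at key
  have hIcc : Finset.Icc 2 m = (Finset.Icc 1 (m - 1)).map (addRightEmbedding 1) := by
    rw [map_add_right_Icc]
    congr 1
    omega
  rw [hIcc, Finset.sum_map] at key
  have hre : ∀ α ∈ Finset.Icc 1 (m - 1),
      ((-1 : ℤ) ^ (m - (addRightEmbedding 1 α)) * (m.choose (addRightEmbedding 1 α) : ℤ))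
        * ((-1) + ((addRightEmbedding 1 α : ℕ)) • (1:ℤ)) ^ m
      = (-1 : ℤ) ^ (m + α + 1) * (m.choose (α + 1)) * (α : ℤ) ^ m := by
    intro α hα
    simp only [Finset.mem_Icc] at hα
    simp only [addRightEmbedding_apply]
    have hsign : ((-1 : ℤ)) ^ (m - (α + 1)) = (-1 : ℤ) ^ (m + α + 1) := by
      have h2 : m + α + 1 = (m - (α + 1)) + 2 * (α + 1) := by omega
      rw [h2, pow_add, pow_mul, neg_one_sq, one_pow, mul_one]
    have hval : ((-1 : ℤ) + ((α + 1 : ℕ)) • (1:ℤ)) ^ m = (α : ℤ) ^ m := by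
      ring_nf
    rw [hsign, hval]
  rw [Finset.sum_congr rfl hre] at key
  omega
end

section
/- The function f(m,n) := ∑_{α=1}^{m-1} (-1)^{m+α+1} · C(m, α+1) · α^n satisfies the recursion f(m,n) = (m-1)·f(m,n-1) + m·f(m-1,n-1) for all n > m ≥ 3. -/
/-- f(m,n) = ∑_{α=1}^{m-1} (-1)^(m+α+1) C(m,α+1) α^n. -/
def stirlingF (m n : ℕ) : ℤ :=
  ∑ α ∈ Finset.Icc 1 (m - 1), (-1 : ℤ) ^ (m + α + 1) * (m.choose (α + 1)) * (α : ℤ) ^ n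

/-- f satisfies f(m,n) = (m-1)·f(m,n-1) + m·f(m-1,n-1) for all n > m ≥ 3. -/
theorem stmt4 (m n : ℕ) (hm : 3 ≤ m) (hmn : m < n) :
    stirlingF m n = ((m : ℤ) - 1) * stirlingF m (n - 1) + (m : ℤ) * stirlingF (m - 1) (n - 1) := by
  obtain ⟨M, rfl⟩ : ∃ M, m = M + 3 := ⟨m - 3, by omega⟩
  obtain ⟨N, rfl⟩ : ∃ N, n = N + 4 := ⟨n - 4, by omega⟩
  simp only [stirlingF]
  have h1 : M + 3 - 1 = M + 2 := rfl
  have h2 : M + 2 - 1 = M + 1 := rfl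
  have h3 : N + 4 - 1 = N + 3 := rfl
  rw [h1, h2, h3]
  have hext : ∑ α ∈ Finset.Icc 1 (M + 1),
        (-1 : ℤ) ^ (M + 2 + α + 1) * ((M + 2).choose (α + 1)) * (α : ℤ) ^ (N + 3)
      = ∑ α ∈ Finset.Icc 1 (M + 2),
        (-1 : ℤ) ^ (M + 2 + α + 1) * ((M + 2).choose (α + 1)) * (α : ℤ) ^ (N + 3) := by
    refine Finset.sum_subset (Finset.Icc_subset_Icc_right (by omega)) fun x hx hx' => ?_
    simp only [Finset.mem_Icc] at hx hx'
    have : x = M + 2 := by omega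
    subst this
    rw [Nat.choose_eq_zero_of_lt (by omega)]
    ring
  rw [hext, Finset.mul_sum, Finset.mul_sum, ← Finset.sum_add_distrib]
  refine Finset.sum_congr rfl fun α hα => ?_
  simp only [Finset.mem_Icc] at hα
  have pascal : (M + 3).choose (α + 1) = (M + 2).choose α + (M + 2).choose (α + 1) :=
    Nat.choose_succ_succ (M + 2) α
  have absorb : (M + 3) * (M + 2).choose α = (M + 3).choose (α + 1) * (α + 1) :=
    Nat.add_one_mul_choose_eq (M + 2) α
  have key : ((M : ℤ) + 3) * ((M + 2).choose (α + 1) : ℤ)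
      = ((M : ℤ) + 2 - α) * ((M + 3).choose (α + 1) : ℤ) := by
    have p : ((M + 3).choose (α + 1) : ℤ)
        = ((M + 2).choose α : ℤ) + ((M + 2).choose (α + 1) : ℤ) := by exact_mod_cast pascal
    have a : ((M : ℤ) + 3) * ((M + 2).choose α : ℤ)
        = ((M + 3).choose (α + 1) : ℤ) * ((α : ℤ) + 1) := by exact_mod_cast absorb
    linarith [mul_comm ((M : ℤ) + 3) ((M + 2).choose (α + 1) : ℤ),
      congrArg (fun x => ((M : ℤ) + 3) * x) p]
  have hs1 : (-1 : ℤ) ^ (M + 3 + α + 1) = (-1 : ℤ) ^ (M + α) := by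
    rw [show M + 3 + α + 1 = M + α + 4 from by ring, pow_add]; ring
  have hs2 : (-1 : ℤ) ^ (M + 2 + α + 1) = -(-1 : ℤ) ^ (M + α) := by
    rw [show M + 2 + α + 1 = M + α + 3 from by ring, pow_add]; ring
  rw [hs1, hs2]
  have hp : (α : ℤ) ^ (N + 4) = (α : ℤ) ^ (N + 3) * α := by rw [pow_succ]
  rw [hp]
  push_cast
  linear_combination ((-1 : ℤ) ^ (M + α) * (α : ℤ) ^ (N + 3)) * key
end

section
/- If a function f : {(m,n) ∈ ℤ×ℤ : n ≥ m ≥ 2} → ℤ satisfies f(m,n) = (m-1)·f(m,n-1) + m·f(m-1,n-1) for all n > m ≥ 3, together with boundary conditions f(2,n) = 1 for all n ≥ 2 and f(m,m) = m! - 1 for all m ≥ 2, then f(m,n) = ∑_{α=1}^{m-1} (-1)^{m+α+1} · C(m, α+1) · α^n for all n ≥ m ≥ 2. -/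
open Finset

private def G (m n : ℕ) : ℤ :=
  ∑ α ∈ Finset.Icc 1 (m - 1), (-1 : ℤ) ^ (m + α + 1) * (m.choose (α + 1)) * (α : ℤ) ^ n

private lemma icc_to_range (m : ℕ) (g : ℕ → ℤ) :
    ∑ α ∈ Icc 1 m, g α = ∑ i ∈ range m, g (i + 1) := by
  induction m with
  | zero => simp
  | succ k ih => rw [Finset.sum_Icc_succ_top (by omega), ih, Finset.sum_range_succ]

private lemma key (m α : ℕ) (hm : 1 ≤ m) :
    ((m : ℤ) - (α + 1)) * (m.choose (α + 1)) = (m : ℤ) * ((m - 1).choose (α + 1)) := by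
  obtain ⟨M, rfl⟩ : ∃ M, m = M + 1 := ⟨m - 1, by omega⟩
  have h1 := Nat.add_one_mul_choose_eq M α
  have h2 : (M + 1).choose (α + 1) = M.choose α + M.choose (α + 1) :=
    Nat.choose_succ_succ' M α
  simp only [Nat.succ_eq_add_one, Nat.add_sub_cancel]
  have h1' : ((M : ℤ) + 1) * M.choose α = (M + 1).choose (α + 1) * (α + 1) := by
    exact_mod_cast congrArg (Nat.cast : ℕ → ℤ) h1
  have h2' : (((M + 1).choose (α + 1) : ℤ)) = M.choose α + M.choose (α + 1) := by
    exact_mod_cast congrArg (Nat.cast : ℕ → ℤ) h2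
  push_cast at h1' h2' ⊢
  linear_combination h2' * ((M : ℤ) + 1) + h1'

private lemma Grec (m n : ℕ) (hm : 3 ≤ m) (hn : 1 ≤ n) :
    G m n = ((m : ℤ) - 1) * G m (n - 1) + (m : ℤ) * G (m - 1) (n - 1) := by
  obtain ⟨M, rfl⟩ : ∃ M, m = M + 2 := ⟨m - 2, by omega⟩
  obtain ⟨N, rfl⟩ : ∃ N, n = N + 1 := ⟨n - 1, by omega⟩
  simp only [G, show M + 2 - 1 = M + 1 from by omega, show M + 1 - 1 = M from by omega,
    show N + 1 - 1 = N from by omega]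
  have hext : ∑ α ∈ Icc 1 M, (-1 : ℤ) ^ (M + 1 + α + 1) *
        ((M + 1).choose (α + 1)) * (α : ℤ) ^ N
      = ∑ α ∈ Icc 1 (M + 1), (-1 : ℤ) ^ (M + 1 + α + 1) *
        ((M + 1).choose (α + 1)) * (α : ℤ) ^ N := by
    rw [Finset.sum_Icc_succ_top (by omega : 1 ≤ M + 1)]
    have hz : (M + 1).choose (M + 1 + 1) = 0 := Nat.choose_eq_zero_of_lt (by omega)
    simp [hz]
  rw [hext]
  rw [Finset.mul_sum, Finset.mul_sum, ← Finset.sum_add_distrib]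
  apply Finset.sum_congr rfl
  intro α hα
  have hk := key (M + 2) α (by omega)
  rw [show M + 2 - 1 = M + 1 from by omega] at hk
  have hpow : (α : ℤ) ^ (N + 1) = (α : ℤ) * (α : ℤ) ^ N := by ring
  rw [hpow]
  have e1 : (-1 : ℤ) ^ (M + 2 + α + 1) = (-1 : ℤ) ^ (M + α + 1) := by
    rw [show M + 2 + α + 1 = (M + α + 1) + 2 by ring, pow_add]; ring
  have e2 : (-1 : ℤ) ^ (M + 1 + α + 1) = -(-1 : ℤ) ^ (M + α + 1) := by
    rw [show M + 1 + α + 1 = (M + α + 1) + 1 by ring, pow_succ]; ring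
  rw [e1, e2]
  push_cast at hk ⊢
  linear_combination (-(-1 : ℤ) ^ (M + α + 1) * (α : ℤ) ^ N) * hk

private lemma alt1 (m : ℕ) (hm : 1 ≤ m) :
    ∑ j ∈ range (m + 1), (-1 : ℤ) ^ j * m.choose j = 0 := by
  rw [Int.alternating_sum_range_choose, if_neg (by omega)]

private lemma sumA (m : ℕ) (hm : 2 ≤ m) :
    ∑ α ∈ Icc 1 (m - 1), (-1 : ℤ) ^ (α + 1) * (m.choose (α + 1)) = (m : ℤ) - 1 := by
  obtain ⟨M, rfl⟩ : ∃ M, m = M + 2 := ⟨m - 2, by omega⟩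
  rw [show M + 2 - 1 = M + 1 from by omega, icc_to_range]
  have h := alt1 (M + 2) (by omega)
  rw [Finset.sum_range_succ' _ (M + 2), Finset.sum_range_succ' _ (M + 1)] at h
  simp only [zero_add, pow_zero, pow_one, Nat.choose_zero_right, Nat.choose_one_right,
    Nat.cast_one, one_mul] at h
  push_cast at h ⊢
  linarith [h]

private lemma sumB (m : ℕ) (hm : 2 ≤ m) :
    ∑ α ∈ Icc 1 (m - 1), (-1 : ℤ) ^ (α + 1) * ((m - 1).choose α) = 1 := by
  obtain ⟨M, rfl⟩ : ∃ M, m = M + 2 := ⟨m - 2, by omega⟩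
  rw [show M + 2 - 1 = M + 1 from by omega, icc_to_range]
  have h := alt1 (M + 1) (by omega)
  rw [Finset.sum_range_succ' _ (M + 1)] at h
  simp only [zero_add, pow_zero, Nat.choose_zero_right, Nat.cast_one, one_mul] at h
  have hc : ∀ i ∈ range (M + 1),
      ((-1 : ℤ)) ^ (i + 1 + 1) * ((M + 1).choose (i + 1))
      = -((-1 : ℤ) ^ (i + 1) * ((M + 1).choose (i + 1))) := by
    intro i _; rw [pow_succ]; ring
  rw [Finset.sum_congr rfl hc, Finset.sum_neg_distrib]
  linarith [h]

private lemma Gbase1 (m : ℕ) (hm : 2 ≤ m) : G m 1 = (-1 : ℤ) ^ m := by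
  have hA := sumA m hm
  have hB := sumB m hm
  have hstep : ∀ α ∈ Icc 1 (m - 1),
      (-1 : ℤ) ^ (m + α + 1) * (m.choose (α + 1)) * (α : ℤ) ^ 1
      = (-1 : ℤ) ^ m * ((m : ℤ) * ((-1 : ℤ) ^ (α + 1) * ((m - 1).choose α))
          - (-1 : ℤ) ^ (α + 1) * (m.choose (α + 1))) := by
    intro α hα
    have h1 := Nat.add_one_mul_choose_eq (m - 1) α
    rw [show m - 1 + 1 = m from by omega] at h1
    have h1' : (m : ℤ) * ((m - 1).choose α) = (m.choose (α + 1)) * ((α : ℤ) + 1) := by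
      exact_mod_cast congrArg (Nat.cast : ℕ → ℤ) h1
    have e : (-1 : ℤ) ^ (m + α + 1) = (-1 : ℤ) ^ m * (-1 : ℤ) ^ (α + 1) := by
      rw [show m + α + 1 = m + (α + 1) by ring, pow_add]
    rw [e, pow_one]
    linear_combination (-((-1 : ℤ) ^ m * (-1 : ℤ) ^ (α + 1))) * h1'
  rw [G, Finset.sum_congr rfl hstep, ← Finset.mul_sum, Finset.sum_sub_distrib,
    ← Finset.mul_sum, hA, hB]
  ring

private lemma G2 (n : ℕ) : G 2 n = 1 := by
  simp [G]

private lemma Gmain : ∀ m, 2 ≤ m →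
    (∀ n, 1 ≤ n → n < m → G m n = (-1 : ℤ) ^ (m + n + 1)) ∧
    G m m = (m.factorial : ℤ) - 1 := by
  intro m hm
  induction m, hm using Nat.le_induction with
  | base =>
    constructor
    · intro n hn hnm
      have : n = 1 := by omega
      subst this
      rw [Gbase1 2 (by norm_num)]; norm_num
    · rw [G2]; norm_num [Nat.factorial]
  | succ m hm ih =>
    have hoff : ∀ n, 1 ≤ n → n < m + 1 → G (m + 1) n = (-1 : ℤ) ^ (m + 1 + n + 1) := by
      intro n hn
      induction n, hn using Nat.le_induction with
      | base =>
        intro _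
        rw [Gbase1 (m + 1) (by omega)]
        rw [show m + 1 + 1 + 1 = (m + 1) + 2 by ring, pow_add]; ring
      | succ k hk ihk =>
        intro hlt
        have hk' : k < m := by omega
        have hrec := Grec (m + 1) (k + 1) (by omega) (by omega)
        simp only [Nat.add_sub_cancel] at hrec
        rw [hrec, ihk (by omega), ih.1 k hk hk']
        rw [show m + 1 + (k + 1) + 1 = (m + k + 1) + 2 by ring,
          show m + 1 + k + 1 = (m + k + 1) + 1 by ring, pow_add, pow_add]
        push_cast
        ring
    refine ⟨hoff, ?_⟩
    have hrec := Grec (m + 1) (m + 1) (by omega) (by omega)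
    simp only [Nat.add_sub_cancel] at hrec
    rw [hrec, hoff m (by omega) (by omega), ih.2]
    rw [show m + 1 + m + 1 = 2 * (m + 1) by ring, pow_mul]
    rw [Nat.factorial_succ]
    push_cast
    ring

/-- If f satisfies the recursion f(m,n) = (m-1)f(m,n-1) + m·f(m-1,n-1) for n > m ≥ 3,
    with boundary conditions f(2,n) = 1 (n ≥ 2) and f(m,m) = m! - 1 (m ≥ 2), then
    f(m,n) = ∑_{α=1}^{m-1} (-1)^(m+α+1) C(m,α+1) α^n for all n ≥ m ≥ 2. -/
theorem stmt5 (f : ℕ → ℕ → ℤ)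
    (hrec : ∀ m n : ℕ, 3 ≤ m → m < n →
      f m n = ((m : ℤ) - 1) * f m (n - 1) + (m : ℤ) * f (m - 1) (n - 1))
    (hb2 : ∀ n : ℕ, 2 ≤ n → f 2 n = 1)
    (hbd : ∀ m : ℕ, 2 ≤ m → f m m = (m.factorial : ℤ) - 1) :
    ∀ m n : ℕ, 2 ≤ m → m ≤ n →
      f m n = ∑ α ∈ Finset.Icc 1 (m - 1), (-1 : ℤ) ^ (m + α + 1) * (m.choose (α + 1)) * (α : ℤ) ^ n := by
  have main : ∀ n m : ℕ, 2 ≤ m → m ≤ n → f m n = G m n := by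
    intro n
    induction n using Nat.strong_induction_on with
    | _ n ihn =>
      intro m hm hmn
      rcases eq_or_lt_of_le hmn with heq | hlt
      · subst heq
        rw [hbd m hm, (Gmain m hm).2]
      · rcases eq_or_lt_of_le hm with h2 | h3
        · subst h2
          rw [hb2 n (by omega), G2]
        · have h3' : 3 ≤ m := by omega
          rw [hrec m n h3' hlt]
          rw [ihn (n - 1) (by omega) m hm (by omega),
            ihn (n - 1) (by omega) (m - 1) (by omega) (by omega)]
          have := Grec m n h3' (by omega)
          linarith [this]
  intro m n hm hmn
  exact main n m hm hmn
end

section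
/- For a tree T with m ≥ 2 vertices and an integer n with 0 ≤ d ≤ n-m, the number of d-dimensional cubes of the Stirling complex Str(T,n) equals C(n,d) · (m-1)^d · m! · S(n-d, m), where S(·,·) is the Stirling number of the second kind. -/
/-- Stirling numbers of the second kind: `stirling n k` counts partitions of an
    n-element set into k nonempty blocks. -/
def stirling : ℕ → ℕ → ℕ
  | 0, 0 => 1
  | 0, _ + 1 => 0
  | _ + 1, 0 => 0
  | n + 1, k + 1 => (k + 1) * stirling n (k + 1) + stirling n k

section SurjCount

lemma keyne {k m : ℕ} {f : Fin (k+1) → Fin (m+1)} (hf1 : Function.Surjective f)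
    (hf2 : ¬ Function.Surjective (f ∘ Fin.castSucc)) (j : Fin k) :
    f (Fin.castSucc j) ≠ f (Fin.last k) := by
  intro h
  apply hf2
  intro w
  obtain ⟨i, hi⟩ := hf1 w
  rcases eq_or_ne i (Fin.last k) with rfl | hil
  · exact ⟨j, by rw [Function.comp_apply, h, hi]⟩
  · obtain ⟨j', rfl⟩ := Fin.exists_castSucc_eq.mpr hil
    exact ⟨j', hi⟩

/-- Case A equiv. -/
def equivA (k m : ℕ) :
    {f : Fin (k+1) → Fin (m+1) // Function.Surjective (f ∘ Fin.castSucc)}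
    ≃ {g : Fin k → Fin (m+1) // Function.Surjective g} × Fin (m+1) where
  toFun f := (⟨f.1 ∘ Fin.castSucc, f.2⟩, f.1 (Fin.last k))
  invFun p := ⟨Fin.snoc p.1.1 p.2, by
    have : (Fin.snoc p.1.1 p.2 : Fin (k+1) → Fin (m+1)) ∘ Fin.castSucc = p.1.1 := by
      funext j; simp
    rw [this]; exact p.1.2⟩
  left_inv f := by
    ext i
    refine Fin.lastCases ?_ (fun j => ?_) i <;> simp
  right_inv p := by
    ext <;> simp

/-- Case B fiber equiv. -/
def equivB (k m : ℕ) (v : Fin (m+1)) :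
    {f : Fin (k+1) → Fin (m+1) //
        (Function.Surjective f ∧ ¬ Function.Surjective (f ∘ Fin.castSucc)) ∧
          f (Fin.last k) = v}
    ≃ {g : Fin k → {w : Fin (m+1) // w ≠ v} // Function.Surjective g} where
  toFun := fun ⟨f, ⟨hf1, hf2⟩, hv⟩ =>
    ⟨fun j => ⟨f (Fin.castSucc j), hv ▸ keyne hf1 hf2 j⟩, by
      rintro ⟨w, hw⟩
      obtain ⟨i, hi⟩ := hf1 w
      have hil : i ≠ Fin.last k := by rintro rfl; rw [hv] at hi; exact hw hi.symm
      obtain ⟨j, rfl⟩ := Fin.exists_castSucc_eq.mpr hil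
      exact ⟨j, Subtype.ext hi⟩⟩
  invFun g := ⟨Fin.snoc (fun j => (g.1 j).1) v, ⟨⟨by
    intro w
    rcases eq_or_ne w v with rfl | hw
    · exact ⟨Fin.last k, by simp⟩
    · obtain ⟨j, hj⟩ := g.2 ⟨w, hw⟩
      exact ⟨Fin.castSucc j, by simp [hj]⟩, by
    intro hs
    obtain ⟨j, hj⟩ := hs v
    simp only [Function.comp_apply, Fin.snoc_castSucc] at hj
    exact (g.1 j).2 hj⟩, by simp⟩⟩
  left_inv := fun ⟨f, ⟨hf1, hf2⟩, hv⟩ => by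
    apply Subtype.ext
    funext i
    refine Fin.lastCases ?_ (fun j => ?_) i
    · simp [hv]
    · simp
  right_inv g := by
    apply Subtype.ext
    funext j
    apply Subtype.ext
    simp

lemma card_surj_congr {α α' β β' : Type*} (ea : α ≃ α') (eb : β ≃ β') :
    Nat.card {f : α → β // Function.Surjective f}
      = Nat.card {f : α' → β' // Function.Surjective f} := by
  apply Nat.card_congr
  refine Equiv.subtypeEquiv (ea.arrowCongr eb) fun f => ?_
  simp [Equiv.arrowCongr, Function.Surjective.of_comp_iff,
    Equiv.surjective_comp, Equiv.comp_surjective]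

lemma card_surj_fin : ∀ k m : ℕ,
    Nat.card {f : Fin k → Fin m // Function.Surjective f}
      = m.factorial * stirling k m := by
  intro k
  induction k with
  | zero =>
    intro m
    match m with
    | 0 =>
      rw [stirling, Nat.factorial_zero, one_mul]
      rw [Nat.card_eq_one_iff_unique]
      constructor
      · constructor
        intro f g
        ext i
        exact absurd i.2 (by omega)
      · exact ⟨⟨fun i => i.elim0, fun v => v.elim0⟩⟩
    | m + 1 =>
      rw [stirling, Nat.mul_zero]
      have : IsEmpty {f : Fin 0 → Fin (m+1) // Function.Surjective f} := by
        constructor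
        rintro ⟨f, hf⟩
        obtain ⟨i, -⟩ := hf 0
        exact i.elim0
      exact Nat.card_of_isEmpty
  | succ k ih =>
    intro m
    match m with
    | 0 =>
      rw [stirling, Nat.mul_zero]
      have : IsEmpty {f : Fin (k+1) → Fin 0 // Function.Surjective f} := by
        constructor
        rintro ⟨f, hf⟩
        exact (f 0).elim0
      exact Nat.card_of_isEmpty
    | m + 1 =>
      classical
      set Q : (Fin (k+1) → Fin (m+1)) → Prop :=
        fun f => Function.Surjective (f ∘ Fin.castSucc) with hQ
      have hsplit : Nat.card {f : Fin (k+1) → Fin (m+1) // Function.Surjective f}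
          = Nat.card {f : Fin (k+1) → Fin (m+1) // Function.Surjective f ∧ Q f}
            + Nat.card {f : Fin (k+1) → Fin (m+1) // Function.Surjective f ∧ ¬ Q f} := by
        rw [← Nat.card_sum]
        apply Nat.card_congr
        exact (Equiv.sumCompl fun x : {f : Fin (k+1) → Fin (m+1) // Function.Surjective f} =>
            Q x.1).symm.trans
          (Equiv.sumCongr (Equiv.subtypeSubtypeEquivSubtypeInter _ (fun f => Q f))
            (Equiv.subtypeSubtypeEquivSubtypeInter _ (fun f => ¬ Q f)))
      have hQsurj : ∀ f : Fin (k+1) → Fin (m+1), Q f → Function.Surjective f := by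
        intro f hf w
        obtain ⟨j, hj⟩ := hf w
        exact ⟨Fin.castSucc j, hj⟩
      have hA : Nat.card {f : Fin (k+1) → Fin (m+1) // Function.Surjective f ∧ Q f}
          = (m+1).factorial * stirling k (m+1) * (m+1) := by
        rw [Nat.card_congr ((Equiv.subtypeEquivRight (fun f =>
          and_iff_right_iff_imp.mpr (fun h => hQsurj f h))).trans (equivA k m)),
          Nat.card_prod, ih (m+1)]
        simp [Nat.card_eq_fintype_card]
      have hB : Nat.card {f : Fin (k+1) → Fin (m+1) // Function.Surjective f ∧ ¬ Q f}
          = (m+1) * (m.factorial * stirling k m) := by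
        rw [Nat.card_eq_fintype_card,
          ← Fintype.card_congr (Equiv.sigmaFiberEquiv (fun x : {f : Fin (k+1) → Fin (m+1) //
            Function.Surjective f ∧ ¬ Q f} => x.1 (Fin.last k))),
          Fintype.card_sigma]
        have key : ∀ v : Fin (m+1),
            Fintype.card {x : {f : Fin (k+1) → Fin (m+1) //
              Function.Surjective f ∧ ¬ Q f} // x.1 (Fin.last k) = v}
            = m.factorial * stirling k m := by
          intro v
          rw [← Nat.card_eq_fintype_card,
            Nat.card_congr ((Equiv.subtypeSubtypeEquivSubtypeInter _ _).trans (equivB k m v)),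
            card_surj_congr (Equiv.refl (Fin k))
              (Fintype.equivFinOfCardEq (n := m) (by simp [Fintype.card_subtype_compl])), ih m]
        simp [key]
      rw [hsplit, hA, hB, stirling, Nat.factorial_succ]
      ring

lemma card_surj (α β : Type*) [Fintype α] [Fintype β] :
    Nat.card {f : α → β // Function.Surjective f}
      = (Fintype.card β).factorial * stirling (Fintype.card α) (Fintype.card β) := by
  rw [card_surj_congr (Fintype.equivFin α) (Fintype.equivFin β), card_surj_fin]

end SurjCount

section Split

lemma inr_getRight' {A B : Type*} : ∀ (x : A ⊕ B) (h : x.isRight), Sum.inr (x.getRight h) = x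
  | Sum.inr _, _ => rfl

lemma inl_getLeft' {A B : Type*} : ∀ (x : A ⊕ B) (h : x.isLeft), Sum.inl (x.getLeft h) = x
  | Sum.inl _, _ => rfl

open Finset in
/-- Splitting a covering tuple with prescribed edge positions. -/
noncomputable def splitEquiv {n : ℕ} {A B : Type*} (t : Finset (Fin n)) :
    {c : Fin n → A ⊕ B //
      (∀ v : A, ∃ i : Fin n, c i = Sum.inl v) ∧
        Finset.univ.filter (fun i => (c i).isRight = true) = t}
    ≃ ((↥t → B) × {g : ↥(tᶜ) → A // Function.Surjective g}) := by
  classical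
  exact
  { toFun := fun ⟨c, hc, ht⟩ =>
      have mem : ∀ i : Fin n, i ∈ t ↔ (c i).isRight = true := fun i => by
        rw [← ht]; simp
      (fun i => (c i.1).getRight ((mem i.1).mp i.2),
       ⟨fun i => (c i.1).getLeft (by
          have hi : i.1 ∉ t := Finset.mem_compl.mp i.2
          rw [mem i.1] at hi
          cases h' : c i.1 <;> simp_all),
        by
          intro v
          obtain ⟨i, hi⟩ := hc v
          have hit : i ∉ t := by rw [mem i, hi]; simp
          refine ⟨⟨i, Finset.mem_compl.mpr hit⟩, ?_⟩
          simp [hi]⟩)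
    invFun := fun p =>
      ⟨fun i => if hi : i ∈ t then Sum.inr (p.1 ⟨i, hi⟩)
          else Sum.inl (p.2.1 ⟨i, Finset.mem_compl.mpr hi⟩), by
        intro v
        obtain ⟨⟨i, hic⟩, hgi⟩ := p.2.2 v
        have hit : i ∉ t := Finset.mem_compl.mp hic
        refine ⟨i, ?_⟩
        simp only [dif_neg hit]
        exact congrArg Sum.inl hgi, by
        ext i
        simp only [Finset.mem_filter, Finset.mem_univ, true_and]
        by_cases hi : i ∈ t <;> simp [hi]⟩
    left_inv := fun ⟨c, hc, ht⟩ => by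
      have mem : ∀ i : Fin n, i ∈ t ↔ (c i).isRight = true := fun i => by
        rw [← ht]; simp
      apply Subtype.ext
      funext i
      by_cases hi : i ∈ t
      · simp only [dif_pos hi]
        exact inr_getRight' _ _
      · simp only [dif_neg hi]
        exact inl_getLeft' _ _
    right_inv := fun p => by
      refine Prod.ext ?_ ?_
      · funext i
        have : (if hi : i.1 ∈ t then Sum.inr (p.1 ⟨i.1, hi⟩)
            else Sum.inl (p.2.1 ⟨i.1, Finset.mem_compl.mpr hi⟩) : A ⊕ B)
            = Sum.inr (p.1 i) := by rw [dif_pos i.2]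
        simp [this]
      · apply Subtype.ext
        funext i
        have hit : i.1 ∉ t := Finset.mem_compl.mp i.2
        have : (if hi : i.1 ∈ t then Sum.inr (p.1 ⟨i.1, hi⟩)
            else Sum.inl (p.2.1 ⟨i.1, Finset.mem_compl.mpr hi⟩) : A ⊕ B)
            = Sum.inl (p.2.1 i) := by rw [dif_neg hit]
        simp [this] }

end Split

/-- For a tree T with m ≥ 2 vertices and 0 ≤ d ≤ n - m, the number of d-dimensional
    cubes of the Stirling complex Str(T,n) — i.e. n-tuples of vertices and edges of T
    whose vertex entries cover all of V(T) and which have exactly d edge entries —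
    equals C(n,d)·(m-1)^d·m!·S(n-d,m). -/
theorem stmt8 {V : Type} [Fintype V] (G : SimpleGraph V) (hT : G.IsTree)
    (m n d : ℕ) (hV : Fintype.card V = m) (hm : 2 ≤ m) (hmn : m ≤ n) (hd : d ≤ n - m) :
    Nat.card {c : Fin n → V ⊕ G.edgeSet //
        (∀ v : V, ∃ i : Fin n, c i = Sum.inl v) ∧
        Nat.card {i : Fin n // (c i).isRight = true} = d}
      = n.choose d * (m - 1) ^ d * m.factorial * stirling (n - d) m := by
  classical
  have hE : Fintype.card G.edgeSet = m - 1 := by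
    have h := hT.card_edgeFinset
    rw [SimpleGraph.edgeFinset_card, hV] at h
    omega
  have hcnt : ∀ c : Fin n → V ⊕ G.edgeSet,
      Nat.card {i : Fin n // (c i).isRight = true}
        = (Finset.univ.filter fun i => (c i).isRight = true).card := by
    intro c
    rw [Nat.card_eq_fintype_card, Fintype.card_subtype]
  rw [Nat.card_eq_fintype_card, Fintype.card_subtype]
  rw [Finset.card_eq_sum_card_fiberwise
    (f := fun c : Fin n → V ⊕ G.edgeSet => Finset.univ.filter fun i => (c i).isRight = true)
    (t := Finset.powersetCard d Finset.univ)
    (by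
      intro c hc
      simp only [Finset.coe_filter, Set.mem_setOf_eq, Finset.mem_filter, Finset.mem_univ, true_and] at hc
      rw [Finset.mem_coe, Finset.mem_powersetCard_univ, ← hcnt c]
      exact hc.2)]
  have hterm : ∀ t ∈ Finset.powersetCard d Finset.univ,
      ((Finset.univ.filter fun c : Fin n → V ⊕ G.edgeSet =>
          ((∀ v : V, ∃ i : Fin n, c i = Sum.inl v) ∧
            Nat.card {i : Fin n // (c i).isRight = true} = d)).filter
        (fun c => (Finset.univ.filter fun i => (c i).isRight = true) = t)).card
      = (m - 1) ^ d * (m.factorial * stirling (n - d) m) := by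
    intro t ht
    rw [Finset.mem_powersetCard_univ] at ht
    rw [Finset.filter_filter, ← Fintype.card_subtype]
    have e1 : {c : Fin n → V ⊕ G.edgeSet //
        ((∀ v : V, ∃ i : Fin n, c i = Sum.inl v) ∧
          Nat.card {i : Fin n // (c i).isRight = true} = d) ∧
          (Finset.univ.filter fun i => (c i).isRight = true) = t}
        ≃ {c : Fin n → V ⊕ G.edgeSet //
        (∀ v : V, ∃ i : Fin n, c i = Sum.inl v) ∧
          (Finset.univ.filter fun i => (c i).isRight = true) = t} := by
      refine Equiv.subtypeEquivRight fun c => ?_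
      constructor
      · rintro ⟨⟨h1, -⟩, h3⟩; exact ⟨h1, h3⟩
      · rintro ⟨h1, h3⟩
        exact ⟨⟨h1, by rw [hcnt c, h3, ht]⟩, h3⟩
    rw [Fintype.card_congr (e1.trans (splitEquiv t)), Fintype.card_prod, Fintype.card_fun,
      ← Nat.card_eq_fintype_card (α := {g : ↥(tᶜ) → V // Function.Surjective g}), card_surj]
    have h1 : Fintype.card ↥t = d := by rw [Fintype.card_coe, ht]
    have h2 : Fintype.card ↥(tᶜ) = n - d := by
      rw [Fintype.card_coe, Finset.card_compl, ht, Fintype.card_fin]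
    rw [h1, h2, hE, hV]
  rw [Finset.sum_congr rfl hterm, Finset.sum_const, Finset.card_powersetCard,
    Finset.card_univ, Fintype.card_fin, smul_eq_mul]
  ring
end

section
/- For n ≥ m ≥ 2, the Euler characteristic of the Stirling complex satisfies χ(Str(T,n)) = ∑_{d=0}^{n-m} (-1)^d · C(n,d) · (m-1)^d · m! · S(n-d, m), and this equals 1 + (-1)^{n-m} · f(m,n) where f(m,n) = ∑_{α=1}^{m-1}(-1)^{m+α+1} C(m,α+1) α^n. -/
lemma stirling_eq_zero : ∀ k m : ℕ, k < m → stirling k m = 0 := by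
  intro k
  induction k with
  | zero => intro m h; match m, h with | m+1, _ => rfl
  | succ n ih =>
    intro m h
    match m, h with
    | k+1, h =>
      show (k + 1) * stirling n (k + 1) + stirling n k = 0
      rw [ih (k+1) (by omega), ih k (by omega)]; simp

lemma stirling_formula : ∀ (N m : ℕ), (m.factorial : ℤ) * stirling N m =
    ∑ j ∈ Finset.range (m + 1), (-1 : ℤ) ^ (m + j) * (m.choose j) * (j : ℤ) ^ N := by
  intro N
  induction N with
  | zero =>
    intro m
    match m with
    | 0 => simp [stirling]
    | m + 1 =>
      have h : ∑ j ∈ Finset.range (m + 2), (-1 : ℤ) ^ (m + 1 + j) * ((m+1).choose j) * (j : ℤ) ^ 0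
          = (-1)^(m+1) * ∑ j ∈ Finset.range (m + 2), (-1 : ℤ) ^ j * ((m+1).choose j) := by
        rw [Finset.mul_sum]
        apply Finset.sum_congr rfl
        intro j _
        rw [pow_add]
        ring
      rw [h, Int.alternating_sum_range_choose]
      simp [stirling]
  | succ N ih =>
    intro m
    match m with
    | 0 => simp [stirling]
    | k + 1 =>
      have hB : (∑ j ∈ Finset.range (k + 2), (-1 : ℤ) ^ (k+1 + j) * ((k+1).choose j) * (j : ℤ) ^ N)
          + (∑ j ∈ Finset.range (k + 1), (-1 : ℤ) ^ (k + j) * (k.choose j) * (j : ℤ) ^ N)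
          = ∑ i ∈ Finset.range (k + 1), (-1 : ℤ) ^ (k + i) * (k.choose i) * ((i : ℤ)+1) ^ N := by
        rw [Finset.sum_range_succ'
              (fun j => (-1 : ℤ) ^ (k+1 + j) * ((k+1).choose j) * (j : ℤ) ^ N) (k+1),
            Finset.sum_range_succ'
              (fun j => (-1 : ℤ) ^ (k + j) * (k.choose j) * (j : ℤ) ^ N) k]
        show _ = _
        push_cast
        have h1 : (∑ i ∈ Finset.range (k + 1),
            (-1 : ℤ) ^ (k+1+(i+1)) * ((k+1).choose (i+1)) * ((i:ℤ)+1) ^ N)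
            = ∑ i ∈ Finset.range (k + 1),
              ((-1 : ℤ) ^ (k+i) * (k.choose i) * ((i:ℤ)+1) ^ N
                + (-1 : ℤ) ^ (k+i) * (k.choose (i+1)) * ((i:ℤ)+1) ^ N) := by
          apply Finset.sum_congr rfl
          intro i _
          rw [Nat.choose_succ_succ]
          have he : k+1+(i+1) = (k+i)+2 := by omega
          rw [he, pow_add]
          push_cast
          ring
        have h2 : (∑ i ∈ Finset.range k,
            (-1 : ℤ) ^ (k+(i+1)) * (k.choose (i+1)) * ((i:ℤ)+1) ^ N)
            = - ∑ i ∈ Finset.range (k+1),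
              (-1 : ℤ) ^ (k+i) * (k.choose (i+1)) * ((i:ℤ)+1) ^ N := by
          rw [show (∑ i ∈ Finset.range k,
              (-1 : ℤ) ^ (k+(i+1)) * (k.choose (i+1)) * ((i:ℤ)+1) ^ N)
              = ∑ i ∈ Finset.range (k+1),
                (-1 : ℤ) ^ (k+(i+1)) * (k.choose (i+1)) * ((i:ℤ)+1) ^ N from by
            rw [Finset.sum_range_succ, Nat.choose_succ_self]; simp]
          rw [← Finset.sum_neg_distrib]
          apply Finset.sum_congr rfl
          intro i _
          have he : k+(i+1) = (k+i)+1 := by omega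
          rw [he, pow_add]
          ring
        push_cast at h1 h2
        rw [h1, h2, Finset.sum_add_distrib]
        simp [pow_add]
        ring
      have hL : (∑ j ∈ Finset.range (k + 2), (-1 : ℤ) ^ (k+1 + j) * ((k+1).choose j) * (j : ℤ) ^ (N+1))
          = (k+1 : ℤ) * ∑ i ∈ Finset.range (k + 1), (-1 : ℤ) ^ (k + i) * (k.choose i) * ((i : ℤ)+1) ^ N := by
        rw [Finset.sum_range_succ'
              (fun j => (-1 : ℤ) ^ (k+1 + j) * ((k+1).choose j) * (j : ℤ) ^ (N+1)) (k+1),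
            Finset.mul_sum]
        show _ = _
        push_cast
        rw [show ((-1:ℤ)) ^ (k + 1) * ((k + 1).choose 0) * 0 ^ (N + 1) = 0 from by
          rw [zero_pow (Nat.succ_ne_zero N)]; ring, add_zero]
        apply Finset.sum_congr rfl
        intro i _
        have hc : ((k+1).choose (i+1) : ℤ) * ((i:ℤ)+1) = (k+1 : ℤ) * (k.choose i) := by
          exact_mod_cast (Nat.add_one_mul_choose_eq k i).symm
        have he : k+1+(i+1) = (k+i)+2 := by omega
        rw [he, pow_add, pow_succ]
        linear_combination ((-1:ℤ))^(k+i) * ((i:ℤ)+1)^N * hc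
      show ((k+1).factorial : ℤ) * ((k + 1) * stirling N (k + 1) + stirling N k) = _
      rw [hL, ← hB]
      rw [← ih (k+1), ← ih k]
      push_cast [Nat.factorial_succ]
      ring

/-- The Euler characteristic identity:
    ∑_{d=0}^{n-m} (-1)^d C(n,d)(m-1)^d m! S(n-d,m) = 1 + (-1)^(n-m) f(m,n),
    where f(m,n) = ∑_{α=1}^{m-1} (-1)^(m+α+1) C(m,α+1) α^n. -/
theorem stmt9 (m n : ℕ) (hm : 2 ≤ m) (hmn : m ≤ n) :
    ∑ d ∈ Finset.range (n - m + 1),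
        (-1 : ℤ) ^ d * (n.choose d) * ((m - 1 : ℕ) : ℤ) ^ d * (m.factorial : ℤ)
          * (stirling (n - d) m : ℤ)
      = 1 + (-1 : ℤ) ^ (n - m) *
          ∑ α ∈ Finset.Icc 1 (m - 1), (-1 : ℤ) ^ (m + α + 1) * (m.choose (α + 1)) * (α : ℤ) ^ n := by
  -- Step 1: extend the sum over all d in range (n+1)
  have h1 : ∑ d ∈ Finset.range (n - m + 1),
        (-1 : ℤ) ^ d * (n.choose d) * ((m - 1 : ℕ) : ℤ) ^ d * (m.factorial : ℤ)
          * (stirling (n - d) m : ℤ)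
      = ∑ d ∈ Finset.range (n + 1),
        (-1 : ℤ) ^ d * (n.choose d) * ((m - 1 : ℕ) : ℤ) ^ d * (m.factorial : ℤ)
          * (stirling (n - d) m : ℤ) := by
    apply Finset.sum_subset
    · exact Finset.range_subset_range.mpr (by omega)
    · intro d hd hnd
      simp only [Finset.mem_range] at hd hnd
      rw [stirling_eq_zero (n - d) m (by omega)]
      simp
  rw [h1]
  -- Step 2: substitute the explicit formula and swap sums
  have h2 : ∑ d ∈ Finset.range (n + 1),
        (-1 : ℤ) ^ d * (n.choose d) * ((m - 1 : ℕ) : ℤ) ^ d * (m.factorial : ℤ)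
          * (stirling (n - d) m : ℤ)
      = ∑ d ∈ Finset.range (n + 1), ∑ j ∈ Finset.range (m + 1),
          ((-1 : ℤ) ^ (m + j) * (m.choose j)) *
            ((-((m - 1 : ℕ) : ℤ)) ^ d * (j : ℤ) ^ (n - d) * (n.choose d)) := by
    apply Finset.sum_congr rfl
    intro d _
    have : (-1 : ℤ) ^ d * (n.choose d) * ((m - 1 : ℕ) : ℤ) ^ d * (m.factorial : ℤ)
          * (stirling (n - d) m : ℤ)
        = ((-1 : ℤ) ^ d * (n.choose d) * ((m - 1 : ℕ) : ℤ) ^ d)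
          * ((m.factorial : ℤ) * (stirling (n - d) m : ℤ)) := by ring
    rw [this, stirling_formula (n - d) m, Finset.mul_sum]
    apply Finset.sum_congr rfl
    intro j _
    rw [neg_pow]
    ring
  rw [h2, Finset.sum_comm]
  -- Step 3: inner sum is a binomial expansion
  have h3 : ∀ j ∈ Finset.range (m + 1),
      ∑ d ∈ Finset.range (n + 1),
          ((-1 : ℤ) ^ (m + j) * (m.choose j)) *
            ((-((m - 1 : ℕ) : ℤ)) ^ d * (j : ℤ) ^ (n - d) * (n.choose d))
        = ((-1 : ℤ) ^ (m + j) * (m.choose j)) * ((j : ℤ) - ((m - 1 : ℕ) : ℤ)) ^ n := by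
    intro j _
    rw [← Finset.mul_sum, ← add_pow (-((m - 1 : ℕ) : ℤ)) (j : ℤ) n]
    ring_nf
  rw [Finset.sum_congr rfl h3]
  -- Step 4: peel off the j = m term
  rw [Finset.sum_range_succ]
  have h4 : ((-1 : ℤ) ^ (m + m) * (m.choose m)) * (((m : ℕ) : ℤ) - ((m - 1 : ℕ) : ℤ)) ^ n = 1 := by
    rw [Nat.choose_self, show ((m : ℕ) : ℤ) - ((m - 1 : ℕ) : ℤ) = 1 by omega,
      show m + m = 2 * m by ring, pow_mul]
    simp
  rw [h4]
  -- Step 5: reflect the remaining sum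
  have h5 : ∑ j ∈ Finset.range m,
        ((-1 : ℤ) ^ (m + j) * (m.choose j)) * ((j : ℤ) - ((m - 1 : ℕ) : ℤ)) ^ n
      = ∑ α ∈ Finset.range m,
        ((-1 : ℤ) ^ (m + (m - 1 - α)) * (m.choose (m - 1 - α)))
          * (((m - 1 - α : ℕ) : ℤ) - ((m - 1 : ℕ) : ℤ)) ^ n :=
    (Finset.sum_range_reflect
      (fun j => ((-1 : ℤ) ^ (m + j) * (m.choose j)) * ((j : ℤ) - ((m - 1 : ℕ) : ℤ)) ^ n) m).symm
  rw [h5]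
  -- Step 6: identify each reflected term with the RHS term
  have h6 : ∀ α ∈ Finset.range m,
      ((-1 : ℤ) ^ (m + (m - 1 - α)) * (m.choose (m - 1 - α)))
          * (((m - 1 - α : ℕ) : ℤ) - ((m - 1 : ℕ) : ℤ)) ^ n
        = (-1 : ℤ) ^ (n - m) * ((-1 : ℤ) ^ (m + α + 1) * (m.choose (α + 1)) * (α : ℤ) ^ n) := by
    intro α hα
    simp only [Finset.mem_range] at hα
    have hc : m.choose (m - 1 - α) = m.choose (α + 1) := by
      rw [show m - 1 - α = m - (α + 1) by omega]
      exact Nat.choose_symm (by omega)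
    have hx : ((m - 1 - α : ℕ) : ℤ) - ((m - 1 : ℕ) : ℤ) = -(α : ℤ) := by omega
    rw [hc, hx, neg_pow]
    have hs : (-1 : ℤ) ^ (m + (m - 1 - α)) * (-1 : ℤ) ^ n
        = (-1 : ℤ) ^ (n - m) * (-1 : ℤ) ^ (m + α + 1) := by
      rw [← pow_add, ← pow_add,
        show m + (m - 1 - α) + n = (n - m + (m + α + 1)) + 2 * (m - 1 - α) by omega,
        pow_add, pow_mul]
      simp
    linear_combination ((m.choose (α + 1) : ℤ) * (α : ℤ) ^ n) * hs
  rw [Finset.sum_congr rfl h6, ← Finset.mul_sum]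
  -- Step 7: range m vs Icc 1 (m-1)
  have h7 : ∑ α ∈ Finset.Icc 1 (m - 1), (-1 : ℤ) ^ (m + α + 1) * (m.choose (α + 1)) * (α : ℤ) ^ n
      = ∑ α ∈ Finset.range m, (-1 : ℤ) ^ (m + α + 1) * (m.choose (α + 1)) * (α : ℤ) ^ n := by
    apply Finset.sum_subset
    · intro x hx
      simp only [Finset.mem_Icc] at hx
      simp only [Finset.mem_range]
      omega
    · intro x hx hnx
      simp only [Finset.mem_range] at hx
      simp only [Finset.mem_Icc] at hnx
      have : x = 0 := by omega
      subst this
      simp only [Nat.cast_zero]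
      rw [zero_pow (by omega : n ≠ 0)]
      ring
  rw [h7]
  ring
end

section
/- For n ≥ 2 and 0 ≤ k ≤ n-2, the number of k-dimensional cells of Str(T,n) where T is a single edge (tree on 2 vertices) equals C(n,k)·(2^{n-k} - 2), and the alternating sum ∑_{k=0}^{n-2} (-1)^k C(n,k)(2^{n-k}-2) equals 1 + (-1)^n. -/
open Finset

private lemma surjCount {A : Type} [Fintype A] {V : Type} [Fintype V]
    (hV : Fintype.card V = 2) :
    Nat.card {f : A → V // Function.Surjective f} = 2 ^ Fintype.card A - 2 := by
  classical
  obtain ⟨a, b, hab, hU⟩ := (Nat.card_eq_two_iff (α := V)).mp (by rw [Nat.card_eq_fintype_card]; exact hV)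
  have h3 : ∀ z : V, z = a ∨ z = b := by
    intro z
    have : z ∈ ({a, b} : Set V) := hU ▸ Set.mem_univ z
    simpa using this
  rcases isEmpty_or_nonempty A with hA | hA
  · have h0 : Fintype.card A = 0 := Fintype.card_eq_zero
    have : IsEmpty {f : A → V // Function.Surjective f} := by
      constructor; rintro ⟨f, hf⟩
      obtain ⟨x, -⟩ := hf a
      exact hA.false x
    rw [h0]
    simp [Nat.card_of_isEmpty]
  · have e : {f : A → V // ¬ Function.Surjective f} ≃ V :=
      { toFun := fun f => f.1 (Classical.arbitrary A)
        invFun := fun v => ⟨fun _ => v, by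
          intro hs
          obtain ⟨w, hw⟩ : ∃ w : V, w ≠ v := by
            rcases h3 v with rfl | rfl
            exacts [⟨b, hab.symm⟩, ⟨a, hab⟩]
          obtain ⟨x, hx⟩ := hs w
          exact hw hx.symm⟩
        left_inv := by
          rintro ⟨f, hf⟩
          have hv : ∃ v : V, ∀ y, f y ≠ v := by
            by_contra hc
            push_neg at hc
            exact hf fun v => by
              obtain ⟨y, hy⟩ := hc v; exact ⟨y, hy⟩
          obtain ⟨v, hvf⟩ := hv
          apply Subtype.ext
          funext x
          have h1 := hvf x
          have h2 := hvf (Classical.arbitrary A)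
          rcases h3 (f x) with hx1 | hx1 <;>
            rcases h3 (f (Classical.arbitrary A)) with hx2 | hx2 <;>
            rcases h3 v with hx3 | hx3 <;> simp_all
        right_inv := fun v => rfl }
    have hc1 : Fintype.card {f : A → V // ¬ Function.Surjective f} = 2 := by
      rw [Fintype.card_congr e, hV]
    have hc2 : Fintype.card {f : A → V // ¬ Function.Surjective f}
        = Fintype.card (A → V) - Fintype.card {f : A → V // Function.Surjective f} :=
      Fintype.card_subtype_compl _
    have hc3 : Fintype.card (A → V) = 2 ^ Fintype.card A := by
      rw [Fintype.card_fun, hV]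
    have hc4 : Fintype.card {f : A → V // Function.Surjective f}
        ≤ Fintype.card (A → V) := Fintype.card_subtype_le _
    have hpow : 2 ≤ 2 ^ Fintype.card A := by
      have : 0 < Fintype.card A := Fintype.card_pos
      calc 2 = 2 ^ 1 := rfl
        _ ≤ 2 ^ Fintype.card A := Nat.pow_le_pow_right (by norm_num) this
    rw [Nat.card_eq_fintype_card]
    omega

private lemma countCells {V E : Type} [Fintype V] [Fintype E]
    (hV : Fintype.card V = 2) (hE : Fintype.card E = 1) (n k : ℕ) (hk : k ≤ n) :
    Nat.card {c : Fin n → V ⊕ E //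
        (∀ v : V, ∃ i : Fin n, c i = Sum.inl v) ∧
        Nat.card {i : Fin n // (c i).isRight = true} = k}
      = n.choose k * (2 ^ (n - k) - 2) := by
  classical
  obtain ⟨e₀⟩ : Nonempty E := Fintype.card_pos_iff.mp (by omega)
  haveI hEsub : Subsingleton E := Fintype.card_le_one_iff_subsingleton.mp (le_of_eq hE)
  obtain ⟨a⟩ : Nonempty V := Fintype.card_pos_iff.mp (by omega)
  set P : (Fin n → V ⊕ E) → Prop := fun c =>
    (∀ v : V, ∃ i : Fin n, c i = Sum.inl v) ∧
      Nat.card {i : Fin n // (c i).isRight = true} = k with hP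
  set rs : (Fin n → V ⊕ E) → Finset (Fin n) :=
    fun c => univ.filter (fun i => (c i).isRight = true) with hrs
  have hcardrs : ∀ c, Nat.card {i : Fin n // (c i).isRight = true} = (rs c).card := by
    intro c
    rw [Nat.card_eq_fintype_card, Fintype.card_subtype]
  -- fiberwise count
  have key : ∀ s ∈ powersetCard k (univ : Finset (Fin n)),
      ((univ : Finset (Fin n → V ⊕ E)).filter (fun c => P c ∧ rs c = s)).card
        = 2 ^ (n - k) - 2 := by
    intro s hs
    rw [mem_powersetCard_univ] at hs
    have eqv : {c : Fin n → V ⊕ E // P c ∧ rs c = s}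
        ≃ {f : {i : Fin n // i ∉ s} → V // Function.Surjective f} :=
      { toFun := fun c => ⟨fun i => Sum.elim id (fun _ => a) (c.1 i.1), by
          intro v
          obtain ⟨i, hi⟩ := c.2.1.1 v
          have hins : i ∉ s := by
            rw [← c.2.2]
            simp only [hrs]
            simp [hi]
          exact ⟨⟨i, hins⟩, by simp [hi]⟩⟩
        invFun := fun f => ⟨fun i => if h : i ∈ s then Sum.inr e₀ else Sum.inl (f.1 ⟨i, h⟩), by
          have hfil : (univ.filter fun i =>
              ((if h : i ∈ s then (Sum.inr e₀ : V ⊕ E) else Sum.inl (f.1 ⟨i, h⟩)).isRight = true))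
              = s := by
            ext i
            by_cases h : i ∈ s <;> simp [h]
          refine ⟨⟨fun v => ?_, ?_⟩, ?_⟩
          · obtain ⟨⟨i, hi⟩, hfi⟩ := f.2 v
            exact ⟨i, by simp [hi, hfi]⟩
          · rw [hcardrs, hrs]
            simp only
            rw [hfil, hs]
          · rw [hrs]
            simp only
            exact hfil⟩
        left_inv := by
          rintro ⟨c, hc⟩
          apply Subtype.ext
          funext i
          simp only
          by_cases h : i ∈ s
          · have : (c i).isRight = true := by
              rw [← hc.2, hrs] at h
              simpa using h
            rw [dif_pos h]
            cases hci : c i with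
            | inl v => simp_all
            | inr x => rw [Subsingleton.elim e₀ x]
          · have : ¬ (c i).isRight = true := by
              rw [← hc.2, hrs] at h
              simpa using h
            rw [dif_neg h]
            cases hci : c i with
            | inl v => simp
            | inr x => simp_all
        right_inv := by
          rintro ⟨f, hf⟩
          apply Subtype.ext
          funext ⟨i, hi⟩
          simp [hi] }
    have h1 : ((univ : Finset (Fin n → V ⊕ E)).filter (fun c => P c ∧ rs c = s)).card
        = Fintype.card {c : Fin n → V ⊕ E // P c ∧ rs c = s} :=
      (Fintype.card_subtype _).symm
    rw [h1, Fintype.card_congr eqv, ← Nat.card_eq_fintype_card,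
      surjCount hV]
    congr 1
    have : Fintype.card {i : Fin n // i ∉ s} = n - k := by
      rw [Fintype.card_subtype_compl]
      simp [hs]
    rw [this]
  have hmaps : ∀ c ∈ (univ : Finset (Fin n → V ⊕ E)).filter P,
      rs c ∈ powersetCard k (univ : Finset (Fin n)) := by
    intro c hc
    rw [mem_filter] at hc
    rw [mem_powersetCard_univ, ← hcardrs]
    exact hc.2.2
  have hsum := Finset.card_eq_sum_card_fiberwise hmaps
  have hgoal : Nat.card (Subtype P) = ((univ : Finset (Fin n → V ⊕ E)).filter P).card := by
    rw [Nat.card_eq_fintype_card, Fintype.card_subtype]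
  rw [hgoal, hsum]
  have : ∀ s ∈ powersetCard k (univ : Finset (Fin n)),
      (((univ : Finset (Fin n → V ⊕ E)).filter P).filter (fun c => rs c = s)).card
        = 2 ^ (n - k) - 2 := by
    intro s hs
    rw [Finset.filter_filter]
    exact key s hs
  rw [Finset.sum_congr rfl this, Finset.sum_const, Finset.card_powersetCard,
    Finset.card_univ, Fintype.card_fin, smul_eq_mul]

/-- For T a tree on 2 vertices (a single edge) and n ≥ 2: the number of k-cells of the
    Stirling complex Str(T,n) is C(n,k)(2^(n-k) - 2) for 0 ≤ k ≤ n-2, and the alternating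
    sum ∑_{k=0}^{n-2} (-1)^k C(n,k)(2^(n-k)-2) equals 1 + (-1)^n. -/
theorem stmt14 {V : Type} [Fintype V] (G : SimpleGraph V) (hT : G.IsTree)
    (hV : Fintype.card V = 2) (n : ℕ) (hn : 2 ≤ n) :
    (∀ k : ℕ, k ≤ n - 2 →
      Nat.card {c : Fin n → V ⊕ G.edgeSet //
          (∀ v : V, ∃ i : Fin n, c i = Sum.inl v) ∧
          Nat.card {i : Fin n // (c i).isRight = true} = k}
        = n.choose k * (2 ^ (n - k) - 2)) ∧
    ∑ k ∈ Finset.range (n - 1), (-1 : ℤ) ^ k * (n.choose k) * ((2 : ℤ) ^ (n - k) - 2)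
      = 1 + (-1 : ℤ) ^ n := by
  classical
  haveI : Fintype G.edgeSet := Fintype.ofFinite _
  constructor
  · intro k hk
    have hE : Fintype.card G.edgeSet = 1 := by
      have h := hT.card_edgeFinset
      rw [hV] at h
      rw [SimpleGraph.edgeFinset_card] at h
      omega
    exact countCells hV hE n k (by omega)
  · obtain ⟨m, rfl⟩ : ∃ m, n = m + 2 := ⟨n - 2, by omega⟩
    have h1 : ∑ k ∈ Finset.range (m + 3),
        (-1 : ℤ) ^ k * ((m+2).choose k) * 2 ^ (m + 2 - k) = 1 := by
      have h := add_pow (-1 : ℤ) 2 (m + 2)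
      norm_num at h
      rw [show (m + 3) = (m + 2) + 1 from rfl]
      rw [Finset.sum_congr rfl (fun k _ => by ring :
        ∀ k ∈ Finset.range ((m+2)+1), (-1 : ℤ) ^ k * ((m+2).choose k) * 2 ^ (m + 2 - k)
          = (-1 : ℤ) ^ k * 2 ^ (m + 2 - k) * ((m+2).choose k))]
      exact h.symm
    have h2 : ∑ k ∈ Finset.range (m + 3), (-1 : ℤ) ^ k * ((m+2).choose k) = 0 :=
      Int.alternating_sum_range_choose_of_ne (by omega)
    have hfull : ∑ k ∈ Finset.range (m + 3),
        (-1 : ℤ) ^ k * ((m+2).choose k) * ((2:ℤ) ^ (m + 2 - k) - 2) = 1 := by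
      have hsplit : ∀ k ∈ Finset.range (m + 3),
          (-1 : ℤ) ^ k * ((m+2).choose k) * ((2:ℤ) ^ (m + 2 - k) - 2)
            = (-1 : ℤ) ^ k * ((m+2).choose k) * 2 ^ (m + 2 - k)
              - 2 * ((-1 : ℤ) ^ k * ((m+2).choose k)) := by
        intro k _
        ring
      rw [Finset.sum_congr rfl hsplit, Finset.sum_sub_distrib, ← Finset.mul_sum, h1, h2]
      ring
    rw [Finset.sum_range_succ, Finset.sum_range_succ] at hfull
    have e1 : m + 2 - (m + 1) = 1 := by omega
    have e2 : m + 2 - (m + 2) = 0 := by omega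
    rw [e1, e2, Nat.choose_self] at hfull
    norm_num at hfull
    have : m + 2 - 1 = m + 1 := by omega
    rw [this]
    linarith [hfull]
end

section
/- For n ≥ m ≥ 2, f(m,n) := ∑_{α=1}^{m-1} (-1)^{m+α+1} C(m,α+1) α^n is a positive integer; in particular f(m,n) ≥ 1. -/
open Finset

/-- Auxiliary abbreviation for the sum in question. -/
def Fint (m n : ℕ) : ℤ :=
  ∑ α ∈ Finset.Icc 1 (m - 1), (-1 : ℤ) ^ (m + α + 1) * (m.choose (α + 1)) * (α : ℤ) ^ n

/-- The m-th forward difference of x^k vanishes when k < m. -/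
lemma diff_pow_zero : ∀ k : ℕ, ∀ m : ℕ, k < m → (fwdDiff (1:ℤ))^[m] (fun x : ℤ ↦ x ^ k) = 0 := by
  intro k
  induction k using Nat.strong_induction_on with
  | _ k IH =>
    intro m hm
    match m, hm with
    | m' + 1, hm =>
      rw [Function.iterate_succ_apply]
      have h1 : fwdDiff (1:ℤ) (fun x : ℤ ↦ x ^ k)
          = ∑ i ∈ Finset.range k, (k.choose i : ℤ) • (fun x : ℤ ↦ x ^ i) := by
        funext x
        simp only [fwdDiff, Finset.sum_apply, Pi.smul_apply, smul_eq_mul]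
        rw [add_pow, Finset.sum_range_succ]
        simp only [Nat.choose_self, one_pow, Nat.cast_one, mul_one, Nat.sub_self, pow_zero]
        rw [add_sub_cancel_right]
        exact Finset.sum_congr rfl fun i _ ↦ by ring
      rw [h1, fwdDiff_iter_finset_sum]
      apply Finset.sum_eq_zero
      intro i hi
      have hik : i < k := Finset.mem_range.mp hi
      rw [fwdDiff_iter_const_smul, IH i hik m' (by omega), smul_zero]

/-- The alternating sum equals the iterated forward difference at -1. -/
lemma S_eq (m n : ℕ) :
    ∑ j ∈ Finset.range (m + 1), (-1 : ℤ) ^ (m + j) * (m.choose j) * ((j : ℤ) - 1) ^ n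
      = (fwdDiff (1:ℤ))^[m] (fun x : ℤ ↦ x ^ n) (-1) := by
  rw [fwdDiff_iter_eq_sum_shift]
  refine Finset.sum_congr rfl fun j hj ↦ ?_
  have hj' : j ≤ m := by simpa using Nat.lt_succ_iff.mp (Finset.mem_range.mp hj)
  have hs : (-1 : ℤ) ^ (m + j) = (-1 : ℤ) ^ (m - j) := by
    rw [show m + j = (m - j) + 2 * j by omega, pow_add, pow_mul]
    simp
  rw [hs, smul_eq_mul, nsmul_eq_mul, mul_one]
  ring_nf

lemma F_eq (m n : ℕ) (hm : 2 ≤ m) (hn : 1 ≤ n) :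
    Fint m n = (∑ j ∈ Finset.range (m + 1), (-1 : ℤ) ^ (m + j) * (m.choose j) * ((j : ℤ) - 1) ^ n)
      - (-1 : ℤ) ^ (m + n) := by
  obtain ⟨m', rfl⟩ : ∃ m', m = m' + 2 := ⟨m - 2, by omega⟩
  rw [show m' + 2 + 1 = (m' + 1) + 1 + 1 from rfl, Finset.sum_range_succ', Finset.sum_range_succ']
  have hz : ((((0:ℕ) + 1 : ℕ)) : ℤ) - 1 = 0 := by norm_num
  rw [hz, zero_pow (by omega : n ≠ 0), mul_zero, add_zero]
  have h0 : (-1 : ℤ) ^ (m' + 2 + 0) * (((m' + 2).choose 0 : ℕ) : ℤ) * (((0:ℕ) : ℤ) - 1) ^ n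
      = (-1 : ℤ) ^ (m' + 2 + n) := by
    simp only [Nat.choose_zero_right, Nat.cast_one, mul_one, Nat.cast_zero, zero_sub, add_zero]
    rw [pow_add]
    ring
  rw [h0]
  rw [Fint, show m' + 2 - 1 = m' + 1 from rfl, ← Finset.Ico_add_one_right_eq_Icc,
    show m' + 1 + 1 = m' + 2 from rfl, Finset.sum_Ico_eq_sum_range,
    show m' + 2 - 1 = m' + 1 from rfl]
  have hsum : ∑ i ∈ Finset.range (m' + 1),
        (-1 : ℤ) ^ (m' + 2 + (1 + i) + 1) * (((m' + 2).choose ((1 + i) + 1) : ℕ) : ℤ) * ((1 + i : ℕ) : ℤ) ^ n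
      = ∑ k ∈ Finset.range (m' + 1),
        (-1 : ℤ) ^ (m' + 2 + (k + 1 + 1)) * (((m' + 2).choose (k + 1 + 1) : ℕ) : ℤ) * (((k + 1 + 1 : ℕ) : ℤ) - 1) ^ n := by
    refine Finset.sum_congr rfl fun i _ ↦ ?_
    rw [show m' + 2 + (1 + i) + 1 = m' + 2 + (i + 1 + 1) by omega, show (1 + i) + 1 = i + 1 + 1 by omega]
    push_cast
    ring_nf
  rw [hsum]
  ring

lemma F_base (m : ℕ) (hm : 2 ≤ m) : Fint m (m - 1) = 1 := by
  rw [F_eq m (m - 1) hm (by omega), S_eq, diff_pow_zero (m - 1) m (by omega)]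
  have : m + (m - 1) = 2 * (m - 1) + 1 := by omega
  rw [this, pow_succ, pow_mul]
  simp

lemma F_rec (m n : ℕ) (hm : 2 ≤ m) :
    Fint m (n + 1) = ((m : ℤ) - 1) * Fint m n + (m : ℤ) * Fint (m - 1) n := by
  have key : (m : ℤ) * Fint (m - 1) n
      = ∑ α ∈ Finset.Icc 1 (m - 1), (m : ℤ) * ((-1) ^ (m + α) * (((m - 1).choose (α + 1) : ℕ) : ℤ) * (α : ℤ) ^ n) := by
    rw [Fint, Finset.mul_sum]
    rw [Finset.sum_subset (Finset.Icc_subset_Icc_right (by omega : m - 1 - 1 ≤ m - 1))]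
    · refine Finset.sum_congr rfl fun α hα ↦ ?_
      have : m - 1 + α + 1 = m + α := by omega
      rw [this]
    · intro α hα hα'
      simp only [Finset.mem_Icc] at hα hα'
      have : α + 1 > m - 1 := by omega
      rw [Nat.choose_eq_zero_of_lt this]
      simp
  rw [key, Fint, Fint, Finset.mul_sum, ← Finset.sum_add_distrib]
  refine Finset.sum_congr rfl fun α hα ↦ ?_
  simp only [Finset.mem_Icc] at hα
  have hch : (m : ℤ) * (((m - 1).choose (α + 1) : ℕ) : ℤ) = ((m : ℤ) - (α : ℤ) - 1) * (m.choose (α + 1)) := by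
    have h := Nat.choose_mul_succ_eq (m - 1) (α + 1)
    have hm1 : m - 1 + 1 = m := by omega
    rw [hm1] at h
    have hsub : ((m - (α + 1) : ℕ) : ℤ) = (m : ℤ) - (α : ℤ) - 1 := by
      have : α + 1 ≤ m := by omega
      push_cast [this]
      ring
    have := congrArg (Nat.cast : ℕ → ℤ) h
    push_cast at this
    rw [mul_comm] at this
    rw [this]
    rw [hsub]
    ring
  have hpow : (-1 : ℤ) ^ (m + α) = -(-1 : ℤ) ^ (m + α + 1) := by
    rw [pow_succ]; ring
  rw [hpow]
  have hα1 : (α : ℤ) ^ (n + 1) = (α : ℤ) ^ n * α := by rw [pow_succ]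
  linear_combination ((-1 : ℤ) ^ (m + α + 1) * (α : ℤ) ^ n) * hch + ((-1 : ℤ) ^ (m + α + 1) * (m.choose (α + 1) : ℤ)) * hα1

lemma F_pos : ∀ n m : ℕ, 2 ≤ m → m - 1 ≤ n → 1 ≤ Fint m n := by
  intro n
  induction n using Nat.strong_induction_on with
  | _ n IH =>
    intro m hm hmn
    rcases eq_or_lt_of_le hmn with h | h
    · rw [← h]; rw [F_base m hm]
    · obtain ⟨n', rfl⟩ : ∃ n', n = n' + 1 := ⟨n - 1, by omega⟩
      rw [F_rec m n' hm]
      have h1 : 1 ≤ Fint m n' := IH n' (by omega) m hm (by omega)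
      have h2 : 0 ≤ Fint (m - 1) n' := by
        rcases Nat.lt_or_ge m 3 with hm3 | hm3
        · have : m = 2 := by omega
          subst this
          simp [Fint]
        · exact le_trans zero_le_one (IH n' (by omega) (m - 1) (by omega) (by omega))
      have hm' : (2 : ℤ) ≤ (m : ℤ) := by exact_mod_cast hm
      nlinarith

/-- For n ≥ m ≥ 2, f(m,n) = ∑_{α=1}^{m-1} (-1)^(m+α+1) C(m,α+1) α^n is at least 1. -/
theorem stmt15 (m n : ℕ) (hm : 2 ≤ m) (hmn : m ≤ n) :
    1 ≤ ∑ α ∈ Finset.Icc 1 (m - 1), (-1 : ℤ) ^ (m + α + 1) * (m.choose (α + 1)) * (α : ℤ) ^ n := by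
  exact F_pos n m hm (by omega)
end
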